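/- Positivity criterion: for an equivariant LR skew tableau L ∈ LR_{λ,μ}^ν, the following are equivalent: (1) c_L > 0; (2) ω(L^u_{<a})_{|a|} > c(a) - r(a) for all barred a ∈ L; (3) the same inequality holds for all barred a with r(a) = 1; (4) ω(L^u_{<a})_{|a|} ≥ c(a) for all barred a; (5) ω(L^u_{<a})_{|a|} ≥ c(a) for all barred a with r(a) = 1. -/

import Mathlib

/-!
Apart from (5 ⇒ 4) the conditions are integer rearrangements of one another. Column
strictness makes `ω(L^u_{<a})_{|a|}` depend only on the column `c` of `a`: it is `N_c(|a|)`,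
the number of `|a|`'s among the unbarred entries read before column `c`, and the Yamanouchi
property makes `N_c(k)` weakly decreasing in `k`. Along the bottom row, `c ≤ N_{c+1}(|b_c|)`
for the bottom cell `b_c` of column `c` follows by induction on `c`: a barred `b_c` satisfies
it by (5), an unbarred one adds its own entry, and entries weakly decrease along the row.
A barred cell `a` higher in column `c` has `|a| < |b_c|` and is the only cell of its value in
that column, so `N_c(|a|) = N_{c+1}(|a|) ≥ N_{c+1}(|b_c|) ≥ c`.
-/

open scoped Classical
open MvPolynomial

noncomputable section

namespace EqLR

/-- Ambient polynomial ring `ℂ[x_1,…,x_d ; y_i (i ∈ ℤ)]`.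
The variables `x_j` are indexed by `Fin d` (so `x_{j+1} = X (Sum.inl j)`), and the
variables `y_i` are indexed by `ℤ` (only positive indices actually occur). -/
abbrev P (d : ℕ) := MvPolynomial (Fin d ⊕ ℤ) ℂ

/-- The variable `y_i`. -/
def yI (d : ℕ) (i : ℤ) : P d := X (Sum.inr i)

/-- The variable `x_v` for a value `v ∈ {1,…,d}` (junk value `0` otherwise). -/
def xv (d : ℕ) (v : ℕ) : P d :=
  if h : v - 1 < d then X (Sum.inl ⟨v - 1, h⟩) else 0

/-- The component `ξ_v` of a vector `ξ ∈ ℕ^d`, for a (1-based) value `v ∈ {1,…,d}`. -/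
def vecAt {d : ℕ} (ξ : Fin d → ℕ) (v : ℕ) : ℕ :=
  if h : v - 1 < d then ξ ⟨v - 1, h⟩ else 0

/-- `μ ∈ ℕ^d` is a partition:  `μ_1 ≥ μ_2 ≥ … ≥ μ_d`. -/
def IsPartitionVec {d : ℕ} (μ : Fin d → ℕ) : Prop :=
  ∀ i j : Fin d, i ≤ j → μ j ≤ μ i

/-- `|μ| = μ_1 + ⋯ + μ_d`. -/
def wt {d : ℕ} (μ : Fin d → ℕ) : ℕ := ∑ i, μ i

/-- `ρ = (d-1, d-2, …, 0)`. -/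
def rho (d : ℕ) : Fin d → ℕ := fun i => d - 1 - (i : ℕ)

/-- Cells `(r, c)` (both 0-based) of the Young/reverse Young diagram whose row `r` has
length `μ_{r+1}`.  For the reverse diagram, rows are numbered bottom-to-top and columns
right-to-left; for the ordinary Young diagram, top-to-bottom and left-to-right. -/
def cells (d : ℕ) (μ : Fin d → ℕ) : Finset (ℕ × ℕ) :=
  (Finset.range d ×ˢ Finset.range (Finset.univ.sup μ + 1)).filter
    fun rc => ∃ h : rc.1 < d, rc.2 < μ ⟨rc.1, h⟩

/-- In the column reading word of a *reverse* diagram (columns right-to-left, i.e. in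
increasing 0-based column index, each column read top-to-bottom, i.e. in decreasing
0-based row index), the cell `b` is read strictly before the cell `a`. -/
def revBefore (a b : ℕ × ℕ) : Prop := b.2 < a.2 ∨ (b.2 = a.2 ∧ a.1 < b.1)

/-- In the column reading word of an ordinary Young diagram (rightmost column first,
each column read top-to-bottom), the cell `b` is read strictly before the cell `a`. -/
def youngBefore (a b : ℕ × ℕ) : Prop := a.2 < b.2 ∨ (b.2 = a.2 ∧ b.1 < a.1)

/-- A reverse tableau of shape `μ`: entries in `{1,…,d}`, weakly increasing along rows
(left to right) and strictly increasing down columns (top to bottom). -/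
structure RevTableau (d : ℕ) (μ : Fin d → ℕ) where
  val : ℕ × ℕ → ℕ
  mem : ∀ a ∈ cells d μ, 1 ≤ val a ∧ val a ≤ d
  zero : ∀ a ∉ cells d μ, val a = 0
  row : ∀ r c : ℕ, (r, c + 1) ∈ cells d μ → val (r, c + 1) ≤ val (r, c)
  col : ∀ r c : ℕ, (r + 1, c) ∈ cells d μ → val (r + 1, c) < val (r, c)

/-- The factor `x_v - y_{(d+1-v) + c(a) - r(a)}` attached to an entry of value `v` in
the cell `a` of the reverse diagram (`c(a) = a.2 + 1`, `r(a) = a.1 + 1`, 1-based). -/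
def factor (d : ℕ) (v : ℕ) (a : ℕ × ℕ) : P d :=
  xv d v - yI d ((d : ℤ) + 1 - (v : ℤ) + (a.2 : ℤ) - (a.1 : ℤ))

/-- The factorial Schur function `s_μ(x|y) = Σ_R (x|y)^R`. -/
def fSchur (d : ℕ) (μ : Fin d → ℕ) : P d :=
  ∑ᶠ R : RevTableau d μ, ∏ a ∈ cells d μ, factor d (R.val a) a

/-- The ordinary Schur function `s_μ(x) = Σ_R x^R`. -/
def schurX (d : ℕ) (μ : Fin d → ℕ) : P d :=
  ∑ᶠ R : RevTableau d μ, ∏ a ∈ cells d μ, xv d (R.val a)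

/-- The subalgebra `ℂ[y]` of polynomials in the `y` variables only. -/
def ySub (d : ℕ) : Subalgebra ℂ (P d) :=
  Algebra.adjoin ℂ (Set.range fun i : ℤ => yI d i)

/-- `p` is symmetric in the `x` variables. -/
def SymmX {d : ℕ} (p : P d) : Prop :=
  ∀ σ : Equiv.Perm (Fin d), rename (⇑(Equiv.sumCongr σ (Equiv.refl ℤ))) p = p

/-- The falling factorial power `(x_j | y)^k = (x_j - y_1)⋯(x_j - y_k)`. -/
def ffPow (d : ℕ) (j : Fin d) (k : ℕ) : P d :=
  ∏ i ∈ Finset.range k, (X (Sum.inl j) - yI d ((i : ℤ) + 1))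

/-- `(x|y)^ξ = (x_1|y)^{ξ_1} ⋯ (x_d|y)^{ξ_d}`. -/
def xyPow (d : ℕ) (ξ : Fin d → ℕ) : P d := ∏ j : Fin d, ffPow d j (ξ j)

/-- The alternant `a_ξ(x|y) = det[(x_j|y)^{ξ_i}]`. -/
def aDet (d : ℕ) (ξ : Fin d → ℕ) : P d :=
  Matrix.det (Matrix.of fun i j : Fin d => ffPow d j (ξ i))

/-! ### Skew barred tableaux of shape `λ*μ` -/

/-- A skew barred tableau of shape `λ*μ`: the Young diagram `λ` (placed above and to
the right of the reverse diagram `μ`) is filled with values in `{1,…,d}` (field `top`),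
the reverse diagram `μ` is filled with values in `{1,…,d}` (field `bot`), some of whose
cells may be barred (field `barred`); values weakly increase along rows left-to-right
and strictly increase down columns, ignoring bars. -/
structure SkewBarredTableau (d : ℕ) (lam mu : Fin d → ℕ) where
  top : ℕ × ℕ → ℕ
  bot : ℕ × ℕ → ℕ
  barred : ℕ × ℕ → Prop
  top_mem : ∀ a ∈ cells d lam, 1 ≤ top a ∧ top a ≤ d
  top_zero : ∀ a ∉ cells d lam, top a = 0
  bot_mem : ∀ a ∈ cells d mu, 1 ≤ bot a ∧ bot a ≤ d
  bot_zero : ∀ a ∉ cells d mu, bot a = 0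
  barred_sub : ∀ a, barred a → a ∈ cells d mu
  top_row : ∀ r c : ℕ, (r, c + 1) ∈ cells d lam → top (r, c) ≤ top (r, c + 1)
  top_col : ∀ r c : ℕ, (r + 1, c) ∈ cells d lam → top (r, c) < top (r + 1, c)
  bot_row : ∀ r c : ℕ, (r, c + 1) ∈ cells d mu → bot (r, c + 1) ≤ bot (r, c)
  bot_col : ∀ r c : ℕ, (r + 1, c) ∈ cells d mu → bot (r + 1, c) < bot (r, c)

namespace SkewBarredTableau

variable {d : ℕ} {lam mu : Fin d → ℕ}

/-- `ω(L^u_{<a})_k`: the number of `k`'s among the unbarred entries of `L` read strictly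
before the `μ`-cell `a` in the unbarred column word (all of `λ` is read before `μ`). -/
def countBefore (L : SkewBarredTableau d lam mu) (a : ℕ × ℕ) (k : ℕ) : ℕ :=
  ((cells d lam).filter fun b => L.top b = k).card +
  ((cells d mu).filter fun b => ¬ L.barred b ∧ L.bot b = k ∧ revBefore a b).card

/-- `ω(L^u_{≤a})_k`: as `countBefore`, but the entry of `a` itself is also counted when
`a` is unbarred. -/
def countUpTo (L : SkewBarredTableau d lam mu) (a : ℕ × ℕ) (k : ℕ) : ℕ :=
  ((cells d lam).filter fun b => L.top b = k).card +
  ((cells d mu).filter fun b => ¬ L.barred b ∧ L.bot b = k ∧ (revBefore a b ∨ b = a)).card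

/-- Prefix content within the `λ`-part of the word. -/
def topCountUpTo (L : SkewBarredTableau d lam mu) (a : ℕ × ℕ) (k : ℕ) : ℕ :=
  ((cells d lam).filter fun b => L.top b = k ∧ (youngBefore a b ∨ b = a)).card

/-- `ω(L^u)_k`: total content of the unbarred column word of `L`. -/
def content (L : SkewBarredTableau d lam mu) (k : ℕ) : ℕ :=
  ((cells d lam).filter fun b => L.top b = k).card +
  ((cells d mu).filter fun b => ¬ L.barred b ∧ L.bot b = k).card

/-- The unbarred column word of `L` is Yamanouchi: every prefix contains at least as
many `k`'s as `(k+1)`'s, for every `k ≥ 1`. -/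
def Yamanouchi (L : SkewBarredTableau d lam mu) : Prop :=
  (∀ a ∈ cells d lam, ∀ k : ℕ, 1 ≤ k → L.topCountUpTo a (k + 1) ≤ L.topCountUpTo a k) ∧
  (∀ a ∈ cells d mu, ¬ L.barred a → ∀ k : ℕ, 1 ≤ k →
      L.countUpTo a (k + 1) ≤ L.countUpTo a k)

/-- `L` is an equivariant Littlewood–Richardson skew tableau of shape `λ*μ` and unbarred
content `ν`. -/
def IsLR (L : SkewBarredTableau d lam mu) (ν : Fin d → ℕ) : Prop :=
  L.Yamanouchi ∧ ∀ i : Fin d, L.content ((i : ℕ) + 1) = ν i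

/-- The index `|a|' + ω(L^u_{<a})_{|a|}` of the first `y` in the factor of `c_L` at a
barred cell `a`. -/
def eIdx (L : SkewBarredTableau d lam mu) (a : ℕ × ℕ) : ℤ :=
  ((d : ℤ) + 1 - (L.bot a : ℤ)) + (L.countBefore a (L.bot a) : ℤ)

/-- The index `|a|' + c(a) - r(a)` of the second `y` in the factor of `c_L` at a barred
cell `a`. -/
def fIdx (L : SkewBarredTableau d lam mu) (a : ℕ × ℕ) : ℤ :=
  ((d : ℤ) + 1 - (L.bot a : ℤ)) + (a.2 : ℤ) - (a.1 : ℤ)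

/-- The weight `c_L = ∏_{a barred} (y_{|a|'+ω(L^u_{<a})_{|a|}} - y_{|a|'+c(a)-r(a)})`. -/
def cWt (L : SkewBarredTableau d lam mu) : P d :=
  ∏ a ∈ (cells d mu).filter (fun a => L.barred a), (yI d (L.eIdx a) - yI d (L.fIdx a))

/-- `Δ(a) = ω(L^u_{≤a})_{|a|} - c(a) + r(a)`. -/
def Δ (L : SkewBarredTableau d lam mu) (a : ℕ × ℕ) : ℤ :=
  (L.countUpTo a (L.bot a) : ℤ) - ((a.2 : ℤ) + 1) + ((a.1 : ℤ) + 1)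

end SkewBarredTableau

/-! ### Reverse barred tableaux -/

/-- A reverse barred tableau of shape `μ`. -/
structure RevBarredTableau (d : ℕ) (μ : Fin d → ℕ) where
  val : ℕ × ℕ → ℕ
  barred : ℕ × ℕ → Prop
  mem : ∀ a ∈ cells d μ, 1 ≤ val a ∧ val a ≤ d
  zero : ∀ a ∉ cells d μ, val a = 0
  barred_sub : ∀ a, barred a → a ∈ cells d μ
  row : ∀ r c : ℕ, (r, c + 1) ∈ cells d μ → val (r, c + 1) ≤ val (r, c)
  col : ∀ r c : ℕ, (r + 1, c) ∈ cells d μ → val (r + 1, c) < val (r, c)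

namespace RevBarredTableau

variable {d : ℕ} {μ : Fin d → ℕ}

/-- `ω(B^u_{<a})_k`. -/
def countBefore (B : RevBarredTableau d μ) (a : ℕ × ℕ) (k : ℕ) : ℕ :=
  ((cells d μ).filter fun b => ¬ B.barred b ∧ B.val b = k ∧ revBefore a b).card

/-- `ω(B^u_{≤a})_k` (including `a` itself when unbarred). -/
def countUpTo (B : RevBarredTableau d μ) (a : ℕ × ℕ) (k : ℕ) : ℕ :=
  ((cells d μ).filter fun b => ¬ B.barred b ∧ B.val b = k ∧ (revBefore a b ∨ b = a)).card

/-- `ω(B^u)_k`. -/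
def content (B : RevBarredTableau d μ) (k : ℕ) : ℕ :=
  ((cells d μ).filter fun b => ¬ B.barred b ∧ B.val b = k).card

/-- `e_{ξ,B}(a) = (ξ + ω(B^u_{<a}))_{|a|}`. -/
def eIdx (B : RevBarredTableau d μ) (ξ : Fin d → ℕ) (a : ℕ × ℕ) : ℤ :=
  (vecAt ξ (B.val a) : ℤ) + (B.countBefore a (B.val a) : ℤ)

/-- `f_B(a) = |a|' + c(a) - r(a)`. -/
def fIdx (B : RevBarredTableau d μ) (a : ℕ × ℕ) : ℤ :=
  ((d : ℤ) + 1 - (B.val a : ℤ)) + (a.2 : ℤ) - (a.1 : ℤ)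

/-- `c_{ξ,B} = ∏_{a barred} (y_{e_{ξ,B}(a)} - y_{f_B(a)})`. -/
def cXi (B : RevBarredTableau d μ) (ξ : Fin d → ℕ) : P d :=
  ∏ a ∈ (cells d μ).filter (fun a => B.barred a), (yI d (B.eIdx ξ a) - yI d (B.fIdx a))

/-- The unbarred column word of `λ*B` is Yamanouchi (the `λ`-part is the canonical
filling of `λ`, whose whole content `λ` is added to every prefix of `B^u`). -/
def StarYam (B : RevBarredTableau d μ) (lam : Fin d → ℕ) : Prop :=
  ∀ a ∈ cells d μ, ¬ B.barred a → ∀ k : ℕ, 1 ≤ k →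
    vecAt lam (k + 1) + B.countUpTo a (k + 1) ≤ vecAt lam k + B.countUpTo a k

end RevBarredTableau

/-! ### Reverse hatted tableaux -/

/-- A hat decoration: none, left hat, or right hat. -/
inductive Hat where
  | unhatted : Hat
  | left : Hat
  | right : Hat
deriving DecidableEq

/-- A reverse hatted tableau of shape `μ`. -/
structure RevHattedTableau (d : ℕ) (μ : Fin d → ℕ) where
  val : ℕ × ℕ → ℕ
  hat : ℕ × ℕ → Hat
  mem : ∀ a ∈ cells d μ, 1 ≤ val a ∧ val a ≤ d
  zero : ∀ a ∉ cells d μ, val a = 0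
  hat_out : ∀ a ∉ cells d μ, hat a = Hat.unhatted
  row : ∀ r c : ℕ, (r, c + 1) ∈ cells d μ → val (r, c + 1) ≤ val (r, c)
  col : ∀ r c : ℕ, (r + 1, c) ∈ cells d μ → val (r + 1, c) < val (r, c)

namespace RevHattedTableau

variable {d : ℕ} {μ : Fin d → ℕ}

/-- `ω(H^u_{<a})_k`: content of the unhatted column word of `H` read before `a`. -/
def countBefore (H : RevHattedTableau d μ) (a : ℕ × ℕ) (k : ℕ) : ℕ :=
  ((cells d μ).filter fun b => H.hat b = Hat.unhatted ∧ H.val b = k ∧ revBefore a b).card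

/-- `ω(H^u)_k`. -/
def content (H : RevHattedTableau d μ) (k : ℕ) : ℕ :=
  ((cells d μ).filter fun b => H.hat b = Hat.unhatted ∧ H.val b = k).card

/-- `e_{ξ,H}(a) = (ξ + ω(H^u_{<a}))_{|a|}`. -/
def eIdx (H : RevHattedTableau d μ) (ξ : Fin d → ℕ) (a : ℕ × ℕ) : ℤ :=
  (vecAt ξ (H.val a) : ℤ) + (H.countBefore a (H.val a) : ℤ)

/-- `f_H(a) = |a|' + c(a) - r(a)`. -/
def fIdx (H : RevHattedTableau d μ) (a : ℕ × ℕ) : ℤ :=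
  ((d : ℤ) + 1 - (H.val a : ℤ)) + (a.2 : ℤ) - (a.1 : ℤ)

/-- `d_{ξ,H} = ∏_{a ∈ H^l} y_{e_{ξ,H}(a)} · ∏_{a ∈ H^r} (-y_{f_H(a)})`. -/
def dWt (H : RevHattedTableau d μ) (ξ : Fin d → ℕ) : P d :=
  (∏ a ∈ (cells d μ).filter (fun a => H.hat a = Hat.left), yI d (H.eIdx ξ a)) *
  ∏ a ∈ (cells d μ).filter (fun a => H.hat a = Hat.right), (-(yI d (H.fIdx a)))

end RevHattedTableau

/-- `H̄ = B`: `H` unbars to the reverse barred tableau `B`. -/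
def UnbarsTo {d : ℕ} {μ : Fin d → ℕ} (H : RevHattedTableau d μ)
    (B : RevBarredTableau d μ) : Prop :=
  H.val = B.val ∧ ∀ a, (H.hat a ≠ Hat.unhatted ↔ B.barred a)

/-- The simple transposition `σ_i` on values: exchanges `i` and `i+1`. -/
def swapVal (i v : ℕ) : ℕ := if v = i then i + 1 else if v = i + 1 then i else v

/-- The action of `σ_i` on `ℕ^d` by permuting coordinates. -/
def swapVec {d : ℕ} (i : ℕ) (ξ : Fin d → ℕ) : Fin d → ℕ :=
  fun j => vecAt ξ (swapVal i ((j : ℕ) + 1))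

/-! ### Reverse (barred) subtableaux -/

/-- A reverse subtableau of shape `μ`: each cell is empty (value `0`) or carries a value
in `{1,…,d}`; no row or column conditions. -/
structure RevSubTableau (d : ℕ) (μ : Fin d → ℕ) where
  val : ℕ × ℕ → ℕ
  mem : ∀ a ∈ cells d μ, val a ≤ d
  zero : ∀ a ∉ cells d μ, val a = 0

/-- A reverse barred subtableau of shape `μ`: a reverse subtableau some of whose filled
cells are barred. -/
structure RevBarredSubTableau (d : ℕ) (μ : Fin d → ℕ) where
  val : ℕ × ℕ → ℕ
  barred : ℕ × ℕ → Prop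
  mem : ∀ a ∈ cells d μ, val a ≤ d
  zero : ∀ a ∉ cells d μ, val a = 0
  barred_filled : ∀ a, barred a → a ∈ cells d μ ∧ val a ≠ 0

/-- `(x|y)^R` for a reverse subtableau `R`. -/
def RevSubTableau.xyProd {d : ℕ} {μ : Fin d → ℕ} (R : RevSubTableau d μ) : P d :=
  ∏ a ∈ (cells d μ).filter (fun a => R.val a ≠ 0), factor d (R.val a) a

namespace RevBarredSubTableau

variable {d : ℕ} {μ : Fin d → ℕ}

/-- `ω(B^u_{<a})_k`: unbarred filled entries of value `k` read before `a`. -/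
def countBefore (B : RevBarredSubTableau d μ) (a : ℕ × ℕ) (k : ℕ) : ℕ :=
  ((cells d μ).filter fun b => ¬ B.barred b ∧ B.val b = k ∧ revBefore a b).card

/-- `ω(B^u)_k`. -/
def content (B : RevBarredSubTableau d μ) (k : ℕ) : ℕ :=
  ((cells d μ).filter fun b => ¬ B.barred b ∧ B.val b = k).card

/-- `e_{ξ,B}(a) = (ξ + ω(B^u_{<a}))_{|a|}`. -/
def eIdx (B : RevBarredSubTableau d μ) (ξ : Fin d → ℕ) (a : ℕ × ℕ) : ℤ :=
  (vecAt ξ (B.val a) : ℤ) + (B.countBefore a (B.val a) : ℤ)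

/-- `f_B(a) = |a|' + c(a) - r(a)`. -/
def fIdx (B : RevBarredSubTableau d μ) (a : ℕ × ℕ) : ℤ :=
  ((d : ℤ) + 1 - (B.val a : ℤ)) + (a.2 : ℤ) - (a.1 : ℤ)

/-- `c_{ξ,B}`. -/
def cXi (B : RevBarredSubTableau d μ) (ξ : Fin d → ℕ) : P d :=
  ∏ a ∈ (cells d μ).filter (fun a => B.barred a), (yI d (B.eIdx ξ a) - yI d (B.fIdx a))

end RevBarredSubTableau

end EqLR

namespace EqLR

variable {d : ℕ}

lemma mem_cells {ξ : Fin d → ℕ} {a : ℕ × ℕ} :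
    a ∈ cells d ξ ↔ ∃ h : a.1 < d, a.2 < ξ ⟨a.1, h⟩ := by
  simp only [cells, Finset.mem_filter, Finset.mem_product, Finset.mem_range,
    and_iff_right_iff_imp]
  rintro ⟨h1, h2⟩
  exact ⟨h1, h2.trans_le (Nat.le_succ_of_le (Finset.le_sup (Finset.mem_univ _)))⟩

lemma mk_mem_cells_of_le_col {ξ : Fin d → ℕ} {r c c' : ℕ} (h : (r, c) ∈ cells d ξ)
    (hc : c' ≤ c) : (r, c') ∈ cells d ξ := by
  obtain ⟨h1, h2⟩ := mem_cells.mp h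
  exact mem_cells.mpr ⟨h1, hc.trans_lt h2⟩

lemma mk_mem_cells_of_le_row {ξ : Fin d → ℕ} (hξ : IsPartitionVec ξ) {r r' c : ℕ}
    (h : (r, c) ∈ cells d ξ) (hr : r' ≤ r) : (r', c) ∈ cells d ξ := by
  obtain ⟨h1, h2⟩ := mem_cells.mp h
  exact mem_cells.mpr ⟨hr.trans_lt h1, h2.trans_le (hξ ⟨r', hr.trans_lt h1⟩ ⟨r, h1⟩ hr)⟩

namespace SkewBarredTableau

variable {lam mu : Fin d → ℕ} (L : SkewBarredTableau d lam mu)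

lemma bot_lt_bot_of_lt (hmu : IsPartitionVec mu) {i j c : ℕ} (hj : (j, c) ∈ cells d mu)
    (hij : i < j) : L.bot (j, c) < L.bot (i, c) := by
  induction j with
  | zero => omega
  | succ j ih =>
    have hstep := L.bot_col j c hj
    rcases (Nat.lt_succ_iff.mp hij).lt_or_eq with hlt | rfl
    · exact hstep.trans (ih (mk_mem_cells_of_le_row hmu hj j.le_succ) hlt)
    · exact hstep

lemma bot_le_bot_of_le (hmu : IsPartitionVec mu) {i j c : ℕ} (hj : (j, c) ∈ cells d mu)
    (hij : i ≤ j) : L.bot (j, c) ≤ L.bot (i, c) := by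
  rcases hij.lt_or_eq with hlt | rfl
  · exact (L.bot_lt_bot_of_lt hmu hj hlt).le
  · exact le_rfl

lemma row_eq_of_bot_eq (hmu : IsPartitionVec mu) {i j c : ℕ} (hi : (i, c) ∈ cells d mu)
    (hj : (j, c) ∈ cells d mu) (h : L.bot (i, c) = L.bot (j, c)) : i = j := by
  rcases Nat.lt_trichotomy i j with hij | hij | hij
  · exact absurd h (L.bot_lt_bot_of_lt hmu hj hij).ne'
  · exact hij
  · exact absurd h (L.bot_lt_bot_of_lt hmu hi hij).ne

/-- `ω(L^u)_k` restricted to the part of the word read before column `c` of `μ`. -/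
def countBeforeCol (c k : ℕ) : ℕ :=
  ((cells d lam).filter fun b => L.top b = k).card +
    ((cells d mu).filter fun b => ¬ L.barred b ∧ L.bot b = k ∧ b.2 < c).card

lemma countBeforeCol_zero (k : ℕ) :
    L.countBeforeCol 0 k = ((cells d lam).filter fun b => L.top b = k).card := by
  simp [countBeforeCol]

lemma countBeforeCol_succ (c k : ℕ) :
    L.countBeforeCol (c + 1) k = L.countBeforeCol c k +
      ((cells d mu).filter fun b => ¬ L.barred b ∧ L.bot b = k ∧ b.2 = c).card := by
  have hsplit : ((cells d mu).filter fun b => ¬ L.barred b ∧ L.bot b = k ∧ b.2 < c + 1) =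
      ((cells d mu).filter fun b => ¬ L.barred b ∧ L.bot b = k ∧ b.2 < c) ∪
        ((cells d mu).filter fun b => ¬ L.barred b ∧ L.bot b = k ∧ b.2 = c) := by
    rw [← Finset.filter_or]
    exact Finset.filter_congr fun b _ => by simp only [Nat.lt_succ_iff_lt_or_eq, and_or_left]
  have hdisj : Disjoint ((cells d mu).filter fun b => ¬ L.barred b ∧ L.bot b = k ∧ b.2 < c)
      ((cells d mu).filter fun b => ¬ L.barred b ∧ L.bot b = k ∧ b.2 = c) :=
    Finset.disjoint_filter.mpr fun _ _ h h' => (h'.2.2 ▸ h.2.2).false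
  rw [countBeforeCol, countBeforeCol, hsplit, Finset.card_union_of_disjoint hdisj, add_assoc]

lemma countBeforeCol_succ_eq_self {c k : ℕ}
    (h : ∀ b ∈ cells d mu, b.2 = c → L.bot b = k → L.barred b) :
    L.countBeforeCol (c + 1) k = L.countBeforeCol c k := by
  rw [countBeforeCol_succ, Finset.card_eq_zero.mpr, add_zero]
  exact Finset.filter_eq_empty_iff.mpr fun b hb hb' => hb'.1 (h b hb hb'.2.2 hb'.2.1)

/-- Within its own column, `a` is preceded only by cells of strictly smaller value. -/
lemma countBefore_eq_countBeforeCol (hmu : IsPartitionVec mu) {i c : ℕ}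
    (ha : (i, c) ∈ cells d mu) :
    L.countBefore (i, c) (L.bot (i, c)) = L.countBeforeCol c (L.bot (i, c)) := by
  refine congrArg (_ + ·) (congrArg Finset.card (Finset.filter_congr fun b hb => ?_))
  refine and_congr_right fun _ => and_congr_right fun hval => or_iff_left ?_
  rintro ⟨hcol, hrow⟩
  obtain ⟨j, c'⟩ := b
  obtain rfl : c' = c := hcol
  exact hrow.ne (L.row_eq_of_bot_eq hmu ha hb hval.symm)

/-- The lowest unbarred cell of a column is the last unbarred cell of that column read. -/
lemma countUpTo_eq_countBeforeCol_succ {j c k : ℕ}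
    (hmin : ∀ i < j, (i, c) ∈ cells d mu → L.barred (i, c)) :
    L.countUpTo (j, c) k = L.countBeforeCol (c + 1) k := by
  refine congrArg (_ + ·) (congrArg Finset.card (Finset.filter_congr fun b hb => ?_))
  refine and_congr_right fun hbar => and_congr_right fun _ => ?_
  obtain ⟨i, c'⟩ := b
  simp only [revBefore, Prod.mk.injEq]
  have : c' = c → j ≤ i := by
    rintro rfl
    exact not_lt.mp fun hi => hbar (hmin i hi hb)
  omega

/-- The column word of `λ` ends at the bottom of its first column. -/
lemma card_top_succ_le (hY : L.Yamanouchi) {k : ℕ} (hk : 1 ≤ k) :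
    ((cells d lam).filter fun b => L.top b = k + 1).card ≤
      ((cells d lam).filter fun b => L.top b = k).card := by
  rcases (cells d lam).eq_empty_or_nonempty with hempty | hne
  · simp [hempty]
  obtain ⟨⟨h, c₀⟩, hb₀, hmax⟩ := (cells d lam).exists_max_image Prod.fst hne
  have hlast : (h, 0) ∈ cells d lam := mk_mem_cells_of_le_col hb₀ (Nat.zero_le c₀)
  have htop : ∀ m, L.topCountUpTo (h, 0) m = ((cells d lam).filter fun b => L.top b = m).card :=
    fun m => congrArg Finset.card (Finset.filter_congr fun b hb => and_iff_left (by
      obtain ⟨i, c⟩ := b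
      have := hmax _ hb
      simp only [youngBefore, Prod.mk.injEq] at this ⊢
      omega))
  simpa only [htop] using hY.1 _ hlast k hk

lemma countBeforeCol_succ_le (hY : L.Yamanouchi) (c : ℕ) {k : ℕ} (hk : 1 ≤ k) :
    L.countBeforeCol c (k + 1) ≤ L.countBeforeCol c k := by
  induction c with
  | zero => simpa only [countBeforeCol_zero] using L.card_top_succ_le hY hk
  | succ c ih =>
    by_cases hcol : ∃ j, (j, c) ∈ cells d mu ∧ ¬ L.barred (j, c)
    · have hmin : ∀ i < Nat.find hcol, (i, c) ∈ cells d mu → L.barred (i, c) :=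
        fun i hi hic => not_not.mp fun h => Nat.find_min hcol hi ⟨hic, h⟩
      obtain ⟨hmem, hbar⟩ := Nat.find_spec hcol
      simpa only [L.countUpTo_eq_countBeforeCol_succ hmin] using hY.2 _ hmem hbar k hk
    · push Not at hcol
      have hall : ∀ m, ∀ b ∈ cells d mu, b.2 = c → L.bot b = m → L.barred b := by
        rintro m ⟨j, c'⟩ hb rfl -
        exact hcol j hb
      rwa [L.countBeforeCol_succ_eq_self (hall _), L.countBeforeCol_succ_eq_self (hall _)]

lemma countBeforeCol_le_of_le (hY : L.Yamanouchi) (c : ℕ) {v w : ℕ} (hv : 1 ≤ v)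
    (hvw : v ≤ w) : L.countBeforeCol c w ≤ L.countBeforeCol c v := by
  induction w, hvw using Nat.le_induction with
  | base => exact le_rfl
  | succ m hm ih => exact (L.countBeforeCol_succ_le hY c (hv.trans hm)).trans ih

section BottomRow

variable (hmu : IsPartitionVec mu) (hY : L.Yamanouchi)
  (hrow : ∀ a ∈ cells d mu, L.barred a → a.1 = 0 → a.2 + 1 ≤ L.countBefore a (L.bot a))
include hmu hY hrow

lemma succ_le_countBeforeCol_succ_bot_zero {c : ℕ} (hc : (0, c) ∈ cells d mu) :
    c + 1 ≤ L.countBeforeCol (c + 1) (L.bot (0, c)) := by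
  have step : ∀ c, (0, c) ∈ cells d mu → c ≤ L.countBeforeCol c (L.bot (0, c)) →
      c + 1 ≤ L.countBeforeCol (c + 1) (L.bot (0, c)) := by
    intro c hc hprev
    rw [countBeforeCol_succ]
    by_cases hbar : L.barred (0, c)
    · have := hrow _ hc hbar rfl
      rw [L.countBefore_eq_countBeforeCol hmu hc] at this
      omega
    · have : 1 ≤ ((cells d mu).filter fun b =>
          ¬ L.barred b ∧ L.bot b = L.bot (0, c) ∧ b.2 = c).card :=
        Finset.one_le_card.mpr ⟨(0, c), Finset.mem_filter.mpr ⟨hc, hbar, rfl, rfl⟩⟩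
      omega
  induction c with
  | zero => exact step 0 hc (Nat.zero_le _)
  | succ c ih =>
    refine step _ hc ((ih (mk_mem_cells_of_le_col hc c.le_succ)).trans ?_)
    exact L.countBeforeCol_le_of_le hY _ (L.bot_mem _ hc).1 (L.bot_row 0 c hc)

lemma succ_le_countBefore_of_barred {a : ℕ × ℕ} (ha : a ∈ cells d mu) (hbar : L.barred a) :
    a.2 + 1 ≤ L.countBefore a (L.bot a) := by
  obtain ⟨r, c⟩ := a
  have hc : (0, c) ∈ cells d mu := mk_mem_cells_of_le_row hmu ha (Nat.zero_le r)
  have honly : ∀ b ∈ cells d mu, b.2 = c → L.bot b = L.bot (r, c) → L.barred b := by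
    rintro ⟨i, c'⟩ hb rfl hval
    obtain rfl := L.row_eq_of_bot_eq hmu hb ha hval
    exact hbar
  calc c + 1 ≤ L.countBeforeCol (c + 1) (L.bot (0, c)) :=
        L.succ_le_countBeforeCol_succ_bot_zero hmu hY hrow hc
    _ ≤ L.countBeforeCol (c + 1) (L.bot (r, c)) :=
        L.countBeforeCol_le_of_le hY _ (L.bot_mem _ ha).1
          (L.bot_le_bot_of_le hmu ha (Nat.zero_le r))
    _ = L.countBeforeCol c (L.bot (r, c)) := L.countBeforeCol_succ_eq_self honly
    _ = L.countBefore (r, c) (L.bot (r, c)) := (L.countBefore_eq_countBeforeCol hmu ha).symm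

end BottomRow

end SkewBarredTableau

theorem positivity_tfae_general (d : ℕ)
    (lam mu nu : Fin d → ℕ)
    (hmu : IsPartitionVec mu)
    (L : SkewBarredTableau d lam mu) (hL : L.IsLR nu) :
    [ (∀ a ∈ cells d mu, L.barred a → L.fIdx a < L.eIdx a),
      (∀ a ∈ cells d mu, L.barred a →
        (a.2 : ℤ) - (a.1 : ℤ) < (L.countBefore a (L.bot a) : ℤ)),
      (∀ a ∈ cells d mu, L.barred a → a.1 = 0 →
        (a.2 : ℤ) - (a.1 : ℤ) < (L.countBefore a (L.bot a) : ℤ)),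
      (∀ a ∈ cells d mu, L.barred a → a.2 + 1 ≤ L.countBefore a (L.bot a)),
      (∀ a ∈ cells d mu, L.barred a → a.1 = 0 → a.2 + 1 ≤ L.countBefore a (L.bot a))
    ].TFAE := by
  tfae_have 1 ↔ 2 := forall₃_congr fun a _ _ => by
    simp only [SkewBarredTableau.eIdx, SkewBarredTableau.fIdx]
    omega
  tfae_have 2 → 3 := fun h a ha hb _ => h a ha hb
  tfae_have 3 → 5 := fun h a ha hb h0 => by have := h a ha hb h0; omega
  tfae_have 5 → 4 := fun h _ => L.succ_le_countBefore_of_barred hmu hL.1 h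
  tfae_have 4 → 2 := fun h a ha hb => by have := h a ha hb; omega
  tfae_finish

/-- Positivity criterion: the following are equivalent for an
equivariant LR skew tableau `L`:
1. `c_L > 0` (every factor `y_i - y_j` of `c_L` has `i > j`);
2. `ω(L^u_{<a})_{|a|} > c(a) - r(a)` for all barred `a`;
3. the same for all barred `a` with `r(a) = 1`;
4. `ω(L^u_{<a})_{|a|} ≥ c(a)` for all barred `a`;
5. the same for all barred `a` with `r(a) = 1`. -/
theorem positivity_tfae (d : ℕ) (hd : 1 ≤ d)
    (lam mu nu : Fin d → ℕ)
    (hlam : IsPartitionVec lam) (hmu : IsPartitionVec mu) (hnu : IsPartitionVec nu)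
    (L : SkewBarredTableau d lam mu) (hL : L.IsLR nu) :
    [ (∀ a ∈ cells d mu, L.barred a → L.fIdx a < L.eIdx a),
      (∀ a ∈ cells d mu, L.barred a →
        (a.2 : ℤ) - (a.1 : ℤ) < (L.countBefore a (L.bot a) : ℤ)),
      (∀ a ∈ cells d mu, L.barred a → a.1 = 0 →
        (a.2 : ℤ) - (a.1 : ℤ) < (L.countBefore a (L.bot a) : ℤ)),
      (∀ a ∈ cells d mu, L.barred a → a.2 + 1 ≤ L.countBefore a (L.bot a)),
      (∀ a ∈ cells d mu, L.barred a → a.1 = 0 → a.2 + 1 ≤ L.countBefore a (L.bot a))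
    ].TFAE :=
  positivity_tfae_general d lam mu nu hmu L hL

end EqLR
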